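/- arXiv:1902.05791 — 3 statements merged into one kernel-verified Lean document; each statement's English description precedes it below -/
import Mathlib

section
/- Let p = (p₁,p₂), p' = (p₁',p₂'), q = (q₁,q₂), q' = (q₁',q₂') be points of ℝ². Define a = (p₂'−p₂)/2, b = (p₁−p₁')/2, c = (p₂'+p₂)/2, d = (p₁+p₁')/2, and similarly a' = (q₂'−q₂)/2, b' = (q₁−q₁')/2, c' = (q₂'+q₂)/2, d' = (q₁+q₁')/2. Then ‖p−q‖ = ‖p'−q'‖ if and only if a·c' − b·d' + a'·c − b'·d = a·c − b·d + a'·c' − b'·d'. -/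
/-! Subtracting the two sides of the meeting condition leaves
`(a - a')(c' - c) - (b - b')(d' - d)`, and in the coordinates of `p, p', q, q'` each product is a
difference of squares, so the defect is `(‖p - q‖² - ‖p' - q'‖²) / 4`. -/

theorem EuclideanSpace.dist_sq_fin_two (x y : EuclideanSpace ℝ (Fin 2)) :
    dist x y ^ 2 = (x 0 - y 0) ^ 2 + (x 1 - y 1) ^ 2 := by
  simp only [EuclideanSpace.dist_sq_eq, Fin.sum_univ_two, Real.dist_eq, sq_abs]

theorem plucker_meet_defect_eq {K : Type*} [Field K]
    {x₀ x₁ x₀' x₁' y₀ y₁ y₀' y₁' a b c d a' b' c' d' : K}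
    (ha : a = (x₁' - x₁) / 2) (hb : b = (x₀ - x₀') / 2)
    (hc : c = (x₁' + x₁) / 2) (hd : d = (x₀ + x₀') / 2)
    (ha' : a' = (y₁' - y₁) / 2) (hb' : b' = (y₀ - y₀') / 2)
    (hc' : c' = (y₁' + y₁) / 2) (hd' : d' = (y₀ + y₀') / 2) :
    a * c' - b * d' + a' * c - b' * d - (a * c - b * d + a' * c' - b' * d') =
      ((x₀ - y₀) ^ 2 + (x₁ - y₁) ^ 2 - ((x₀' - y₀') ^ 2 + (x₁' - y₁') ^ 2)) / 2 ^ 2 := by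
  subst_vars
  -- a polynomial identity in `2⁻¹`, which `ring` would otherwise evaluate as a numeral
  simp only [div_eq_mul_inv, ← inv_pow]
  generalize (2 : K)⁻¹ = t
  ring

/-- **Plücker meeting condition and equal distances.** With the Elekes–Sharir
Plücker coordinates `a = (p₂'−p₂)/2`, `b = (p₁−p₁')/2`, `c = (p₂'+p₂)/2`, `d = (p₁+p₁')/2`
attached to `(p,p')` (and primed versions attached to `(q,q')`), one has
`‖p−q‖ = ‖p'−q'‖` if and only if `ac' − bd' + a'c − b'd = ac − bd + a'c' − b'd'`. -/
theorem dist_eq_iff_plucker_meet (p p' q q' : EuclideanSpace ℝ (Fin 2))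
    (a b c d a' b' c' d' : ℝ)
    (ha : a = (p' 1 - p 1) / 2) (hb : b = (p 0 - p' 0) / 2)
    (hc : c = (p' 1 + p 1) / 2) (hd : d = (p 0 + p' 0) / 2)
    (ha' : a' = (q' 1 - q 1) / 2) (hb' : b' = (q 0 - q' 0) / 2)
    (hc' : c' = (q' 1 + q 1) / 2) (hd' : d' = (q 0 + q' 0) / 2) :
    dist p q = dist p' q' ↔
      a * c' - b * d' + a' * c - b' * d = a * c - b * d + a' * c' - b' * d' := by
  have defect := plucker_meet_defect_eq ha hb hc hd ha' hb' hc' hd'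
  rw [← sq_eq_sq₀ dist_nonneg dist_nonneg, EuclideanSpace.dist_sq_fin_two,
    EuclideanSpace.dist_sq_fin_two]
  constructor <;> intro h <;> linarith
end

section
/- There exist absolute constants c, C > 0 such that for every integer M ≥ 2, the number of quadruples (n₁, n₂, n₃, n₄) of integers with 1 ≤ nᵢ ≤ M for each i and n₁·n₄ = n₂·n₃ satisfies c·M²·log M ≤ #{(n₁,n₂,n₃,n₄) : n₁n₄ = n₂n₃, 1 ≤ nᵢ ≤ M} ≤ C·M²·log M. -/
/-!
A solution is a singular matrix `[[n₁, n₂], [n₃, n₄]]`, hence of the form `(a s, b s, a t, b t)`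
with `gcd a b = 1`, and then `max a b * max s t ≤ M`. Dropping coprimality, there are at most
`∑_{a, b ≤ M} ⌊M / max a b⌋² ≤ 2 M² H_M` solutions. Conversely, for each dyadic scale
`2 ^ (j + 1) ≤ M`, a coprime pair `(a, b) ≤ M / 2 ^ (j + 1)` (at least a quarter of all pairs,
as `∑_{d ≥ 2} d⁻² < 3 / 4`) together with `(s, t)` in the shell `[1, 2 ^ (j + 1)]² \ [1, 2 ^ j]²`
gives a solution; these are distinct, about `M²` per scale, and there are `log₂ M` scales.
-/

open Finset

def grid (N : ℕ) : Finset (ℕ × ℕ) := Icc 1 N ×ˢ Icc 1 N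

@[simp]
lemma mem_grid {N : ℕ} {p : ℕ × ℕ} : p ∈ grid N ↔ (1 ≤ p.1 ∧ p.1 ≤ N) ∧ 1 ≤ p.2 ∧ p.2 ≤ N := by
  simp [grid]

lemma card_grid (N : ℕ) : #(grid N) = N ^ 2 := by
  simp [grid, sq]

lemma grid_mono : Monotone grid := fun _ _ h =>
  product_subset_product (Icc_subset_Icc_right h) (Icc_subset_Icc_right h)

def energyQuadruples (M : ℕ) : Finset (ℕ × ℕ × ℕ × ℕ) :=
  (Icc 1 M ×ˢ Icc 1 M ×ˢ Icc 1 M ×ˢ Icc 1 M).filter fun x => x.1 * x.2.2.2 = x.2.1 * x.2.2.1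

/-- The rank-one matrix `(s, t)ᵀ (a, b)` for `x = ((a, b), (s, t))`, read row by row. -/
def rankOneQuad (x : (ℕ × ℕ) × (ℕ × ℕ)) : ℕ × ℕ × ℕ × ℕ :=
  (x.1.1 * x.2.1, x.1.2 * x.2.1, x.1.1 * x.2.2, x.1.2 * x.2.2)

lemma exists_rankOneQuad_eq_of_mul_eq_mul {n₁ n₂ n₃ n₄ : ℕ} (h₂ : n₂ ≠ 0)
    (h : n₁ * n₄ = n₂ * n₃) : ∃ x, rankOneQuad x = (n₁, n₂, n₃, n₄) := by
  obtain ⟨a, b, hab, ha, hb⟩ := Nat.exists_coprime n₁ n₂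
  set g := n₁.gcd n₂
  have hb₀ : b ≠ 0 := by rintro rfl; simp_all
  have hg₀ : g ≠ 0 := by rintro hg; simp_all
  have hprop : a * n₄ = b * n₃ :=
    Nat.eq_of_mul_eq_mul_right (Nat.pos_of_ne_zero hg₀) (by
      calc a * n₄ * g = n₁ * n₄ := by rw [ha]; ring
        _ = b * n₃ * g := by rw [h, hb]; ring)
  obtain ⟨t, rfl⟩ : b ∣ n₄ := hab.symm.dvd_of_dvd_mul_left ⟨n₃, hprop⟩
  have hn₃ : n₃ = a * t :=
    Nat.eq_of_mul_eq_mul_left (Nat.pos_of_ne_zero hb₀) (by rw [← hprop]; ring)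
  exact ⟨((a, b), (g, t)), by simp [rankOneQuad, ha, hb, hn₃]⟩

/-- For coprime `a, b` the scale `s` is recovered as `gcd (a s) (b s)`. -/
lemma injOn_rankOneQuad :
    Set.InjOn rankOneQuad {x | x.1.1.Coprime x.1.2 ∧ 0 < x.1.1 ∧ 0 < x.2.1} := by
  rintro ⟨⟨a, b⟩, s, t⟩ ⟨hab, ha, hs⟩ ⟨⟨a', b'⟩, s', t'⟩ ⟨hab', -, -⟩ h
  simp only [rankOneQuad, Prod.mk.injEq] at h ⊢
  obtain ⟨h₁, h₂, h₃, h₄⟩ := h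
  have hss' : s' = s := by
    simpa [Nat.gcd_mul_right, hab.gcd_eq_one, hab'.gcd_eq_one, h₁, h₂] using
      Nat.gcd_mul_right a s b
  subst hss'
  have haa' : a = a' := Nat.eq_of_mul_eq_mul_right hs h₁
  subst haa'
  exact ⟨⟨rfl, Nat.eq_of_mul_eq_mul_right hs h₂⟩, rfl, Nat.eq_of_mul_eq_mul_left ha h₃⟩

def rankOneDomain (M : ℕ) : Finset ((_ : ℕ × ℕ) × (ℕ × ℕ)) :=
  (grid M).sigma fun p => grid (M / max p.1 p.2)

lemma surjOn_rankOneDomain (M : ℕ) :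
    Set.SurjOn (fun x : (_ : ℕ × ℕ) × (ℕ × ℕ) => rankOneQuad (x.1, x.2)) (rankOneDomain M)
      (energyQuadruples M) := by
  rintro ⟨n₁, n₂, n₃, n₄⟩ hn
  simp only [energyQuadruples, coe_filter, mem_product, mem_Icc, Set.mem_ofPred_eq] at hn
  obtain ⟨⟨⟨h₁, h₁M⟩, ⟨h₂, h₂M⟩, ⟨h₃, h₃M⟩, ⟨h₄, h₄M⟩⟩, h⟩ := hn
  obtain ⟨⟨⟨a, b⟩, s, t⟩, hx⟩ := exists_rankOneQuad_eq_of_mul_eq_mul (by omega) h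
  simp only [rankOneQuad, Prod.mk.injEq] at hx
  obtain ⟨rfl, rfl, rfl, rfl⟩ := hx
  obtain ⟨ha, hs⟩ := Nat.mul_ne_zero_iff.1 (by omega : a * s ≠ 0)
  obtain ⟨hb, ht⟩ := Nat.mul_ne_zero_iff.1 (by omega : b * t ≠ 0)
  have hmax : ∀ u, a * u ≤ M → b * u ≤ M → u ≤ M / max a b := fun u hau hbu =>
    (Nat.le_div_iff_mul_le (by omega)).2 <| by
      rw [mul_comm, max_mul_of_nonneg _ _ u.zero_le]
      exact max_le hau hbu
  refine ⟨⟨(a, b), (s, t)⟩, ?_, rfl⟩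
  simp only [rankOneDomain, coe_sigma, Set.mem_sigma_iff, mem_coe, mem_grid]
  refine ⟨⟨⟨?_, ?_⟩, ?_, ?_⟩, ⟨?_, hmax s h₁M h₂M⟩, ?_, hmax t h₃M h₄M⟩
  all_goals first
    | omega
    | exact (Nat.le_mul_of_pos_right _ (Nat.pos_of_ne_zero hs)).trans ‹_›

lemma card_energyQuadruples_le_sum (M : ℕ) :
    #(energyQuadruples M) ≤ ∑ p ∈ grid M, (M / max p.1 p.2) ^ 2 := by
  simpa [rankOneDomain, card_grid] using card_le_card_of_surjOn _ (surjOn_rankOneDomain M)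

lemma sum_inv_sq_max_le {a M : ℕ} (ha : 0 < a) (haM : a ≤ M) :
    ∑ b ∈ Icc 1 M, ((max a b : ℝ) ^ 2)⁻¹ ≤ 2 / a := by
  rw [show Icc 1 M = Ioc 0 M from Icc_add_one_left_eq_Ioc 0 M,
    ← sum_Ioc_consecutive _ a.zero_le haM]
  have hlow : ∑ b ∈ Ioc 0 a, ((max a b : ℝ) ^ 2)⁻¹ = 1 / a := by
    rw [sum_congr rfl fun b hb => by rw [max_eq_left (by simpa using (mem_Ioc.1 hb).2)],
      sum_const, Nat.card_Ioc, Nat.sub_zero, nsmul_eq_mul]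
    field_simp
  have hhigh : ∑ b ∈ Ioc a M, ((max a b : ℝ) ^ 2)⁻¹ ≤ 1 / a := by
    rw [sum_congr rfl fun b hb => by rw [max_eq_right (by simpa using (mem_Ioc.1 hb).1.le)]]
    have htail := sum_Ioc_inv_sq_le_sub (α := ℝ) ha.ne' haM
    have hM : (0 : ℝ) ≤ (M : ℝ)⁻¹ := by positivity
    rw [one_div]
    linarith
  linarith [show (2 : ℝ) / a = 1 / a + 1 / a by ring]

lemma sum_grid_inv_sq_max_le (M : ℕ) :
    ∑ p ∈ grid M, ((max p.1 p.2 : ℝ) ^ 2)⁻¹ ≤ 2 * harmonic M := by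
  simp only [grid, sum_product, harmonic_eq_sum_Icc, Rat.cast_sum, Rat.cast_inv,
    Rat.cast_natCast, mul_sum]
  refine sum_le_sum fun a ha => ?_
  rw [mem_Icc] at ha
  exact (sum_inv_sq_max_le ha.1 ha.2).trans_eq (div_eq_mul_inv _ _)

lemma card_energyQuadruples_le {M : ℕ} (hM : 2 ≤ M) :
    (#(energyQuadruples M) : ℝ) ≤ 2 * (1 + (Real.log 2)⁻¹) * M ^ 2 * Real.log M := by
  have hlog : Real.log 2 ≤ Real.log M := Real.log_le_log two_pos (by exact_mod_cast hM)
  have hlog2 : 0 < Real.log 2 := Real.log_pos one_lt_two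
  calc (#(energyQuadruples M) : ℝ)
      ≤ ∑ p ∈ grid M, ((M / max p.1 p.2 : ℕ) : ℝ) ^ 2 := by
        exact_mod_cast card_energyQuadruples_le_sum M
    _ ≤ ∑ p ∈ grid M, (M : ℝ) ^ 2 * ((max p.1 p.2 : ℝ) ^ 2)⁻¹ := by
        refine sum_le_sum fun p _ => ?_
        rw [← div_eq_mul_inv, ← div_pow]
        gcongr
        exact_mod_cast Nat.cast_div_le
    _ ≤ M ^ 2 * (2 * (1 + Real.log M)) := by
        rw [← mul_sum]
        gcongr
        exact (sum_grid_inv_sq_max_le M).trans (by gcongr; exact harmonic_le_one_add_log M)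
    _ ≤ 2 * (1 + (Real.log 2)⁻¹) * M ^ 2 * Real.log M := by
        have hratio : 1 ≤ (Real.log 2)⁻¹ * Real.log M := by
          rw [inv_mul_eq_div, le_div_iff₀ hlog2]; linarith
        nlinarith [sq_nonneg (M : ℝ)]

def coprimePairs (N : ℕ) : Finset (ℕ × ℕ) := (grid N).filter fun p => p.1.Coprime p.2

lemma card_filter_dvd_grid (N d : ℕ) :
    #((grid N).filter fun p => d ∣ p.1 ∧ d ∣ p.2) = (N / d) ^ 2 := by
  rw [grid, filter_product (d ∣ ·) (d ∣ ·), card_product,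
    show Icc 1 N = Ioc 0 N from Icc_add_one_left_eq_Ioc 0 N, Nat.Ioc_filter_dvd_card_eq_div, sq]

lemma sum_Icc_two_inv_sq_le (N : ℕ) : ∑ d ∈ Icc 2 N, ((d : ℝ) ^ 2)⁻¹ ≤ 3 / 4 := by
  rcases lt_or_ge N 2 with hN | hN
  · norm_num [Icc_eq_empty_of_lt hN]
  rw [← Ioc_insert_left hN, sum_insert (by simp)]
  have htail := sum_Ioc_inv_sq_le_sub (α := ℝ) two_ne_zero hN
  have hN' : (0 : ℝ) ≤ (N : ℝ)⁻¹ := by positivity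
  norm_num at htail ⊢
  linarith

lemma card_coprimePairs_ge (N : ℕ) : (N : ℝ) ^ 2 / 4 ≤ #(coprimePairs N) := by
  have hcover : (grid N).filter (fun p => ¬ p.1.Coprime p.2) ⊆
      (Icc 2 N).biUnion fun d => (grid N).filter fun p => d ∣ p.1 ∧ d ∣ p.2 := by
    intro p hp
    simp only [mem_filter, mem_grid] at hp
    obtain ⟨⟨⟨h₁, h₁N⟩, h₂, h₂N⟩, hcop⟩ := hp
    have hg : 0 < p.1.gcd p.2 := Nat.gcd_pos_of_pos_left _ h₁
    simp only [mem_biUnion, mem_Icc, mem_filter, mem_grid]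
    exact ⟨p.1.gcd p.2, ⟨by unfold Nat.Coprime at hcop; omega,
      (Nat.gcd_le_left _ h₁).trans h₁N⟩, ⟨⟨h₁, h₁N⟩, h₂, h₂N⟩,
      Nat.gcd_dvd_left _ _, Nat.gcd_dvd_right _ _⟩
  have hnot : (#((grid N).filter fun p => ¬ p.1.Coprime p.2) : ℝ) ≤ 3 / 4 * N ^ 2 :=
    calc (#((grid N).filter fun p => ¬ p.1.Coprime p.2) : ℝ)
        ≤ ∑ d ∈ Icc 2 N, ((N / d : ℕ) : ℝ) ^ 2 := by
          exact_mod_cast (card_le_card hcover).trans <|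
            card_biUnion_le.trans_eq (sum_congr rfl fun d _ => card_filter_dvd_grid N d)
      _ ≤ ∑ d ∈ Icc 2 N, (N : ℝ) ^ 2 * ((d : ℝ) ^ 2)⁻¹ := by
          refine sum_le_sum fun d _ => ?_
          rw [← div_eq_mul_inv, ← div_pow]
          gcongr
          exact Nat.cast_div_le
      _ ≤ 3 / 4 * N ^ 2 := by
          rw [← mul_sum, mul_comm]
          gcongr
          exact sum_Icc_two_inv_sq_le N
  have hsplit := card_filter_add_card_filter_not (s := grid N) (fun p => p.1.Coprime p.2)
  rw [card_grid] at hsplit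
  rw [coprimePairs]
  have hcount : (N : ℝ) ^ 2 = #((grid N).filter fun p => p.1.Coprime p.2) +
      #((grid N).filter fun p => ¬ p.1.Coprime p.2) := by exact_mod_cast hsplit.symm
  linarith

def dyadicShell (j : ℕ) : Finset (ℕ × ℕ) := grid (2 ^ (j + 1)) \ grid (2 ^ j)

lemma card_dyadicShell (j : ℕ) : #(dyadicShell j) = 3 * 4 ^ j := by
  have hsq : ∀ k, (2 ^ k) ^ 2 = 4 ^ k := fun k => by rw [pow_right_comm]; norm_num
  rw [dyadicShell, card_sdiff_of_subset (grid_mono (Nat.pow_le_pow_right two_pos j.le_succ)),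
    card_grid, card_grid, hsq, hsq, pow_succ]
  omega

lemma disjoint_dyadicShell {i j : ℕ} (h : i ≠ j) : Disjoint (dyadicShell i) (dyadicShell j) :=
  (pairwise_disjoint_on dyadicShell).2 (fun _ _ hlt =>
    disjoint_sdiff.mono_left (sdiff_subset.trans (grid_mono (Nat.pow_le_pow_right two_pos hlt)))) h

lemma rankOneQuad_mem_energyQuadruples {N K M : ℕ} (h : N * K ≤ M) {x : (ℕ × ℕ) × (ℕ × ℕ)}
    (hx : x ∈ grid N ×ˢ grid K) : rankOneQuad x ∈ energyQuadruples M := by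
  simp only [mem_product, mem_grid] at hx
  obtain ⟨⟨⟨ha, haN⟩, hb, hbN⟩, ⟨hs, hsK⟩, ht, htK⟩ := hx
  have hle : ∀ {u v}, u ≤ N → v ≤ K → u * v ≤ M := fun hu hv => (Nat.mul_le_mul hu hv).trans h
  simp only [energyQuadruples, rankOneQuad, mem_filter, mem_product, mem_Icc]
  exact ⟨⟨⟨Nat.one_le_iff_ne_zero.2 (by positivity), hle haN hsK⟩,
    ⟨Nat.one_le_iff_ne_zero.2 (by positivity), hle hbN hsK⟩,
    ⟨Nat.one_le_iff_ne_zero.2 (by positivity), hle haN htK⟩,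
    ⟨Nat.one_le_iff_ne_zero.2 (by positivity), hle hbN htK⟩⟩, by ring⟩

lemma sum_card_le_card_energyQuadruples (M : ℕ) :
    ∑ j ∈ range (Nat.log 2 M), #(coprimePairs (M / 2 ^ (j + 1))) * #(dyadicShell j) ≤
      #(energyQuadruples M) := by
  have hdisj : (range (Nat.log 2 M) : Set ℕ).PairwiseDisjoint
      fun j => coprimePairs (M / 2 ^ (j + 1)) ×ˢ dyadicShell j :=
    fun i _ j _ hij => disjoint_product.2 (Or.inr (disjoint_dyadicShell hij))
  simp_rw [← card_product]
  rw [← card_biUnion hdisj]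
  refine card_le_card_of_injOn rankOneQuad (fun x hx => ?_) (injOn_rankOneQuad.mono fun x hx => ?_)
  all_goals
    obtain ⟨j, -, hj⟩ := mem_biUnion.1 hx
    have hsub : coprimePairs (M / 2 ^ (j + 1)) ×ˢ dyadicShell j ⊆
        grid (M / 2 ^ (j + 1)) ×ˢ grid (2 ^ (j + 1)) :=
      product_subset_product (filter_subset _ _) sdiff_subset
  · exact rankOneQuad_mem_energyQuadruples (Nat.div_mul_le_self _ _) (hsub hj)
  · have hgrid := hsub hj
    simp only [mem_product, mem_grid] at hgrid
    exact ⟨(mem_filter.1 (mem_product.1 hj).1).2, hgrid.1.1.1, hgrid.2.1.1⟩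

lemma cast_le_two_mul_mul_div {M d : ℕ} (hd : 0 < d) (h : d ≤ M) :
    (M : ℝ) ≤ 2 * d * (M / d : ℕ) := by
  have hlt := Nat.lt_div_mul_add (a := M) hd
  have hle : d ≤ M / d * d := Nat.le_mul_of_pos_left d (Nat.div_pos h hd)
  exact_mod_cast (by linarith : M ≤ 2 * d * (M / d))

lemma le_card_coprimePairs_mul_card_dyadicShell {M j : ℕ} (h : 2 ^ (j + 1) ≤ M) :
    3 / 64 * (M : ℝ) ^ 2 ≤ #(coprimePairs (M / 2 ^ (j + 1))) * #(dyadicShell j) := by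
  rw [card_dyadicShell, Nat.cast_mul, Nat.cast_pow]
  set N := M / 2 ^ (j + 1)
  have hM : (M : ℝ) ≤ 2 * 2 ^ (j + 1) * N := by
    exact_mod_cast cast_le_two_mul_mul_div (by positivity) h
  have hMN : (M : ℝ) ^ 2 ≤ 16 * 4 ^ j * N ^ 2 :=
    calc (M : ℝ) ^ 2 ≤ (2 * 2 ^ (j + 1) * N) ^ 2 := pow_le_pow_left₀ (by positivity) hM 2
      _ = 16 * 4 ^ j * N ^ 2 := by
        rw [show (4 : ℝ) ^ j = (2 ^ j) ^ 2 by rw [pow_right_comm]; norm_num]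
        ring
  have hcop := mul_le_mul_of_nonneg_right (card_coprimePairs_ge N)
    (by positivity : (0 : ℝ) ≤ 3 * 4 ^ j)
  linarith

lemma log_le_natLog_mul_log_four {M : ℕ} (hM : 2 ≤ M) :
    Real.log M ≤ Nat.log 2 M * Real.log 4 := by
  have hJ : 1 ≤ Nat.log 2 M := Nat.log_pos one_lt_two hM
  have hM4 : M ≤ 4 ^ Nat.log 2 M :=
    calc M ≤ 2 ^ (Nat.log 2 M + 1) := (Nat.lt_pow_succ_log_self one_lt_two M).le
      _ ≤ 2 ^ (2 * Nat.log 2 M) := Nat.pow_le_pow_right two_pos (by omega)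
      _ = 4 ^ Nat.log 2 M := by rw [pow_mul]; norm_num
  rw [← Real.log_pow]
  exact Real.log_le_log (by positivity) (by exact_mod_cast hM4)

lemma card_energyQuadruples_ge {M : ℕ} (hM : 2 ≤ M) :
    3 / (64 * Real.log 4) * M ^ 2 * Real.log M ≤ #(energyQuadruples M) := by
  have hlog4 : 0 < Real.log 4 := Real.log_pos (by norm_num)
  calc 3 / (64 * Real.log 4) * M ^ 2 * Real.log M
      ≤ 3 / (64 * Real.log 4) * M ^ 2 * (Nat.log 2 M * Real.log 4) := by
        gcongr
        exact log_le_natLog_mul_log_four hM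
    _ = ∑ _j ∈ range (Nat.log 2 M), 3 / 64 * (M : ℝ) ^ 2 := by
        rw [sum_const, card_range, nsmul_eq_mul]
        field_simp
    _ ≤ ∑ j ∈ range (Nat.log 2 M), (#(coprimePairs (M / 2 ^ (j + 1))) * #(dyadicShell j) : ℝ) := by
        refine sum_le_sum fun j hj => le_card_coprimePairs_mul_card_dyadicShell ?_
        calc 2 ^ (j + 1) ≤ 2 ^ Nat.log 2 M := Nat.pow_le_pow_right two_pos (mem_range.1 hj)
          _ ≤ M := Nat.pow_log_le_self 2 (by omega)
    _ ≤ #(energyQuadruples M) := by exact_mod_cast sum_card_le_card_energyQuadruples M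

/-- **Multiplicative energy of `{1, …, M}`.** There are absolute constants `c, C > 0`
such that for every integer `M ≥ 2` the number of quadruples `(n₁,n₂,n₃,n₄)` of integers
in `{1, …, M}` with `n₁·n₄ = n₂·n₃` lies between `c·M²·log M` and `C·M²·log M`. -/
theorem multiplicative_energy_of_interval :
    ∃ c C : ℝ, 0 < c ∧ 0 < C ∧ ∀ M : ℕ, 2 ≤ M →
      c * (M : ℝ) ^ 2 * Real.log M ≤
        ((((Finset.Icc 1 M) ×ˢ (Finset.Icc 1 M) ×ˢ (Finset.Icc 1 M) ×ˢ
            (Finset.Icc 1 M)).filter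
            (fun x : ℕ × ℕ × ℕ × ℕ => x.1 * x.2.2.2 = x.2.1 * x.2.2.1)).card : ℝ) ∧
      ((((Finset.Icc 1 M) ×ˢ (Finset.Icc 1 M) ×ˢ (Finset.Icc 1 M) ×ˢ
          (Finset.Icc 1 M)).filter
          (fun x : ℕ × ℕ × ℕ × ℕ => x.1 * x.2.2.2 = x.2.1 * x.2.2.1)).card : ℝ) ≤
        C * (M : ℝ) ^ 2 * Real.log M := by
  have hlog2 : 0 < Real.log 2 := Real.log_pos one_lt_two
  have hlog4 : 0 < Real.log 4 := Real.log_pos (by norm_num)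
  exact ⟨3 / (64 * Real.log 4), 2 * (1 + (Real.log 2)⁻¹), by positivity, by positivity,
    fun M hM => ⟨card_energyQuadruples_ge hM, card_energyQuadruples_le hM⟩⟩
end

section
/- There is an absolute constant C such that for every finite nonempty set L of lines in ℝ³ there exists a nonzero real polynomial f in three variables of total degree at most C·√|L| such that every line of L is contained in the zero set of f. -/
/-!
A polynomial of degree at most `d` that vanishes at `d + 1` points of a line vanishes on the whole
line, because its restriction to the line is a univariate polynomial of degree at most `d`. So for
`n` lines it suffices to impose `n (d + 1)` linear conditions, and a nonzero solution of degree
at most `d` exists as soon as this is less than the dimension of the space of such polynomials.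
With `k = ⌊√(3n)⌋` and `d = 3k`, the monomials `x^a y^b z^c` with `a, b, c ≤ k` alone give
dimension `(k + 1)³ > n (3k + 1)`, since `3n < (k + 1)²`; and `3k ≤ 3√3 √n ≤ 6 √n`.
-/

open MvPolynomial

/-- A line in `ℝ³`: a one-dimensional affine subspace, as a set of points. -/
def IsLine (l : Set (Fin 3 → ℝ)) : Prop :=
  ∃ p v : Fin 3 → ℝ, v ≠ 0 ∧ l = {x | ∃ t : ℝ, x = p + t • v}

namespace MvPolynomial

variable {σ : Type*}

theorem pow_card_le_finrank_restrictTotalDegree [Fintype σ] {R : Type*} [CommRing R]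
    [Nontrivial R] (k : ℕ) :
    (k + 1) ^ Fintype.card σ ≤
      Module.finrank R (restrictTotalDegree σ R (Fintype.card σ * k)) := by
  classical
  let e : (σ → Fin (k + 1)) → σ →₀ ℕ :=
    fun a => Finsupp.equivFunOnFinite.symm fun i => (a i : ℕ)
  have he : Function.Injective e := fun a b hab => _root_.funext fun i =>
    Fin.val_injective (congrFun (Finsupp.equivFunOnFinite.symm.injective hab) i)
  have hdeg (a : σ → Fin (k + 1)) :
      monomial (e a) (1 : R) ∈ restrictTotalDegree σ R (Fintype.card σ * k) := by
    rw [mem_restrictTotalDegree, totalDegree_monomial _ one_ne_zero,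
      Finsupp.sum_fintype _ _ fun _ => rfl]
    calc ∑ i, e a i ≤ ∑ _i : σ, k :=
          Finset.sum_le_sum fun i _ => Nat.lt_succ_iff.mp (a i).isLt
      _ = Fintype.card σ * k := by simp
  let b (a : σ → Fin (k + 1)) : restrictTotalDegree σ R (Fintype.card σ * k) :=
    ⟨monomial (e a) 1, hdeg a⟩
  have hb : LinearIndependent R b := by
    apply LinearIndependent.of_comp (restrictTotalDegree σ R _).subtype
    simpa [b, Function.comp_def, coe_basisMonomials] using
      (basisMonomials σ R).linearIndependent.comp e he
  simpa using hb.fintype_card_le_finrank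

theorem exists_ne_zero_totalDegree_le_forall_eval_eq_zero [Finite σ] {K : Type*} [Field K]
    (S : Finset (σ → K)) {d : ℕ} (h : S.card < Module.finrank K (restrictTotalDegree σ K d)) :
    ∃ f : MvPolynomial σ K, f ≠ 0 ∧ f.totalDegree ≤ d ∧ ∀ x ∈ S, eval x f = 0 := by
  let T := LinearMap.funLeft K K ((↑) : S → σ → K) ∘ₗ evalₗ K σ ∘ₗ
    (restrictTotalDegree σ K d).subtype
  have hT : LinearMap.ker T ≠ ⊥ := LinearMap.ker_ne_bot_of_finrank_lt (by simpa using h)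
  obtain ⟨⟨f, hfd⟩, hTf, hf0⟩ := (Submodule.ne_bot_iff _).mp hT
  refine ⟨f, by simpa using hf0, (mem_restrictTotalDegree _ _ _).mp hfd, fun x hx => ?_⟩
  exact congrFun hTf ⟨x, hx⟩

section Line

variable {R : Type*} [CommRing R]

theorem natDegree_aeval_le_totalDegree (f : MvPolynomial σ R) {φ : σ → Polynomial R}
    (hφ : ∀ i, (φ i).natDegree ≤ 1) : (aeval φ f).natDegree ≤ f.totalDegree := by
  conv_lhs => rw [f.as_sum, map_sum]
  refine Polynomial.natDegree_sum_le_of_forall_le _ _ fun s hs => ?_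
  rw [aeval_monomial]
  refine Polynomial.natDegree_mul_le.trans ?_
  rw [Polynomial.algebraMap_apply, Polynomial.natDegree_C, zero_add]
  refine le_trans ?_ (le_totalDegree hs)
  refine (Polynomial.natDegree_prod_le _ _).trans (Finset.sum_le_sum fun i _ => ?_)
  calc (φ i ^ s i).natDegree ≤ s i * (φ i).natDegree := Polynomial.natDegree_pow_le
    _ ≤ s i := mul_le_of_le_one_right' (hφ i)

theorem polynomial_eval_aeval (f : MvPolynomial σ R) (φ : σ → Polynomial R) (t : R) :
    (aeval φ f).eval t = eval (fun i => (φ i).eval t) f := by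
  rw [aeval_def, polynomial_eval_eval₂]
  congr 1
  ext
  simp

noncomputable def restrictLine (f : MvPolynomial σ R) (p v : σ → R) : Polynomial R :=
  aeval (fun i => Polynomial.C (v i) * Polynomial.X + Polynomial.C (p i)) f

theorem eval_restrictLine (f : MvPolynomial σ R) (p v : σ → R) (t : R) :
    (f.restrictLine p v).eval t = eval (p + t • v) f := by
  have hline : (fun i => (Polynomial.C (v i) * Polynomial.X + Polynomial.C (p i)).eval t) =
      p + t • v := by
    ext i
    simp only [Polynomial.eval_add, Polynomial.eval_mul, Polynomial.eval_C, Polynomial.eval_X,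
      Pi.add_apply, Pi.smul_apply, smul_eq_mul]
    ring
  rw [restrictLine, polynomial_eval_aeval, hline]

theorem natDegree_restrictLine_le (f : MvPolynomial σ R) (p v : σ → R) :
    (f.restrictLine p v).natDegree ≤ f.totalDegree :=
  natDegree_aeval_le_totalDegree f fun _ => Polynomial.natDegree_linear_le

theorem eval_add_smul_eq_zero_of_totalDegree_lt [IsDomain R] {f : MvPolynomial σ R}
    {p v : σ → R} {T : Finset R} (hT : f.totalDegree < T.card)
    (hf : ∀ t ∈ T, eval (p + t • v) f = 0) (t : R) : eval (p + t • v) f = 0 := by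
  have hline : f.restrictLine p v = 0 :=
    Polynomial.eq_zero_of_natDegree_lt_card_of_eval_eq_zero' _ T
      (fun t ht => by rw [eval_restrictLine, hf t ht])
      ((natDegree_restrictLine_le f p v).trans_lt hT)
  rw [← eval_restrictLine, hline, Polynomial.eval_zero]

end Line

theorem exists_ne_zero_totalDegree_le_forall_eval_line_eq_zero [Finite σ] {K : Type*} [Field K]
    [CharZero K] {ι : Type*} (s : Finset ι) (p v : ι → σ → K) {d : ℕ}
    (h : s.card * (d + 1) < Module.finrank K (restrictTotalDegree σ K d)) :
    ∃ f : MvPolynomial σ K, f ≠ 0 ∧ f.totalDegree ≤ d ∧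
      ∀ i ∈ s, ∀ t : K, eval (p i + t • v i) f = 0 := by
  classical
  let T : Finset K := (Finset.range (d + 1)).image (↑)
  have hT : T.card = d + 1 := by simp [T, Finset.card_image_of_injective _ Nat.cast_injective]
  let S := (s ×ˢ T).image fun x => p x.1 + x.2 • v x.1
  have hS : S.card < Module.finrank K (restrictTotalDegree σ K d) :=
    Finset.card_image_le.trans_lt (by rwa [Finset.card_product, hT])
  obtain ⟨f, hf0, hfd, hfS⟩ := exists_ne_zero_totalDegree_le_forall_eval_eq_zero S hS
  refine ⟨f, hf0, hfd, fun i hi => eval_add_smul_eq_zero_of_totalDegree_lt (T := T) ?_ ?_⟩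
  · omega
  · exact fun t ht =>
      hfS _ (Finset.mem_image.mpr ⟨(i, t), Finset.mem_product.mpr ⟨hi, ht⟩, rfl⟩)

end MvPolynomial

/-- **Polynomial interpolation for lines.** There is an absolute constant `C` such that
every finite nonempty set `L` of lines in `ℝ³` is contained in the zero set of some
nonzero polynomial in three variables of total degree at most `C·√|L|`. -/
theorem lines_contained_in_low_degree_surface :
    ∃ C : ℝ, 0 < C ∧
      ∀ L : Finset (Set (Fin 3 → ℝ)), L.Nonempty → (∀ l ∈ L, IsLine l) →
        ∃ f : MvPolynomial (Fin 3) ℝ, f ≠ 0 ∧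
          (f.totalDegree : ℝ) ≤ C * Real.sqrt (L.card : ℝ) ∧
          ∀ l ∈ L, ∀ x ∈ l, MvPolynomial.eval x f = 0 := by
  refine ⟨6, by norm_num, fun L _ hlines => ?_⟩
  choose! p v _ hline using hlines
  set n := L.card
  set k := Nat.sqrt (3 * n)
  have hcount : n * (3 * k + 1) < (k + 1) ^ 3 := by
    have := Nat.lt_succ_sqrt (3 * n)
    nlinarith
  have hdim := pow_card_le_finrank_restrictTotalDegree (σ := Fin 3) (R := ℝ) k
  rw [Fintype.card_fin] at hdim
  have hdeg : (3 * k : ℝ) ≤ 6 * √n := by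
    have hk : (k : ℝ) ≤ √3 * √n := by
      rw [← Real.sqrt_mul zero_le_three]
      exact_mod_cast Real.nat_sqrt_le_real_sqrt
    have h3 : √3 ≤ 2 := Real.sqrt_le_iff.mpr ⟨zero_le_two, by norm_num⟩
    nlinarith [Real.sqrt_nonneg (n : ℝ)]
  obtain ⟨f, hf0, hfd, hf⟩ :=
    exists_ne_zero_totalDegree_le_forall_eval_line_eq_zero L p v (hcount.trans_le hdim)
  refine ⟨f, hf0, ?_, fun l hl x hx => ?_⟩
  · exact (Nat.cast_le.mpr hfd).trans (by exact_mod_cast hdeg)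
  · rw [hline l hl] at hx
    obtain ⟨t, rfl⟩ := hx
    exact hf l hl t
end
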